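/- Let n > 1 be an integer and H < -1. Define C_0 = n · (H^2 n - 2 + H·sqrt(4 - 4n + H^2 n^2)) / (H(n-2) + sqrt(4 - 4n + H^2 n^2))^((2n-2)/n) · (2H^2 - 2)^((n-2)/n). Then for every C with C_0 < C < 0, the function q(v) = C - v^(2-2n) + (1 - H^2)v^2 - 2H v^(2-n) has exactly two positive roots. -/

import Mathlib

/-!
Substituting `t = v ^ n`, one has `q v = C - v ^ (2 - 2n) * r t` with
`r t = (1 + (H - 1) t) (1 + (H + 1) t)`, and `q' v = 2 v ^ (1 - 2n) * p t` with the quadratic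
`p t = (1 - H²) t² + H (n - 2) t + (n - 1)`. As `p 0 > 0` and `p` opens downwards, `p` has a single
positive root `w`, so `q` increases up to `v₀ = w ^ (1/n)` and decreases afterwards.
From `p w = 0` one gets `r w = n (1 + H w)`, which turns `q v₀` into `C - C₀ > 0`.
Since `C < 0` and `r ≥ 0` both for small and for large `t`, `q` is negative near `0` and near `∞`;
the intermediate value theorem gives a root on each side of `v₀`, and strict monotonicity
excludes any other.
-/

open Real Set Filter Topology

theorem exists_two_zeros_of_strictMonoOn_of_strictAntiOn {f : ℝ → ℝ} {l m : ℝ} (hlm : l < m)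
    (hf : ContinuousOn f (Ioi l)) (hmono : StrictMonoOn f (Ioc l m))
    (hanti : StrictAntiOn f (Ici m)) (hm : 0 < f m) (hleft : ∀ᶠ x in 𝓝[>] l, f x < 0)
    (hright : ∀ᶠ x in atTop, f x < 0) :
    ∃ a b, l < a ∧ l < b ∧ a ≠ b ∧ f a = 0 ∧ f b = 0 ∧
      ∀ v, l < v → f v = 0 → v = a ∨ v = b := by
  obtain ⟨x₁, ⟨hlx₁, hx₁m⟩, hfx₁⟩ : ∃ x ∈ Ioo l m, f x < 0 :=
    (Eventually.and (Ioo_mem_nhdsGT hlm) hleft).exists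
  obtain ⟨x₂, hmx₂, hfx₂⟩ : ∃ x, m < x ∧ f x < 0 := ((eventually_gt_atTop m).and hright).exists
  obtain ⟨a, ⟨hx₁a, ham⟩, hfa⟩ :=
    intermediate_value_Ioo hx₁m.le (hf.mono fun x hx => hlx₁.trans_le hx.1) ⟨hfx₁, hm⟩
  obtain ⟨b, ⟨hmb, -⟩, hfb⟩ :=
    intermediate_value_Ioo' hmx₂.le (hf.mono fun x hx => hlm.trans_le hx.1) ⟨hfx₂, hm⟩
  have hla : l < a := hlx₁.trans hx₁a
  refine ⟨a, b, hla, hlm.trans hmb, (ham.trans hmb).ne, hfa, hfb, fun v hv hfv => ?_⟩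
  rcases le_total v m with hvm | hmv
  · exact Or.inl (hmono.injOn ⟨hv, hvm⟩ ⟨hla, ham.le⟩ (hfv.trans hfa.symm))
  · exact Or.inr (hanti.injOn hmv (mem_Ici.2 hmb.le) (hfv.trans hfb.symm))

noncomputable def q (n : ℕ) (H C v : ℝ) : ℝ :=
  C - v ^ (2 - 2 * (n : ℤ)) + (1 - H ^ 2) * v ^ 2 - 2 * H * v ^ (2 - (n : ℤ))

def valuePoly (H t : ℝ) : ℝ := (1 + (H - 1) * t) * (1 + (H + 1) * t)

def derivPoly (n : ℕ) (H t : ℝ) : ℝ := (1 - H ^ 2) * t ^ 2 + H * (n - 2) * t + (n - 1)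

-- `4 - 4n + H²n²` is the discriminant of `derivPoly n H`.
noncomputable def critRoot (n : ℕ) (H : ℝ) : ℝ :=
  (H * (n - 2) + √(4 - 4 * n + H ^ 2 * n ^ 2)) / (2 * H ^ 2 - 2)

noncomputable def otherRoot (n : ℕ) (H : ℝ) : ℝ :=
  (H * (n - 2) - √(4 - 4 * n + H ^ 2 * n ^ 2)) / (2 * H ^ 2 - 2)

noncomputable def critPoint (n : ℕ) (H : ℝ) : ℝ := critRoot n H ^ (n⁻¹ : ℝ)

noncomputable def critConst (n : ℕ) (H : ℝ) : ℝ :=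
  (n : ℝ) * ((H ^ 2 * n - 2 + H * √(4 - 4 * n + H ^ 2 * n ^ 2)) /
    (H * ((n : ℝ) - 2) + √(4 - 4 * n + H ^ 2 * n ^ 2)) ^ ((2 * (n : ℝ) - 2) / n)) *
    (2 * H ^ 2 - 2) ^ (((n : ℝ) - 2) / n)

section

variable {n : ℕ} {H C v t : ℝ}

theorem q_eq_sub_mul_valuePoly (hv : v ≠ 0) :
    q n H C v = C - v ^ (2 - 2 * (n : ℤ)) * valuePoly H (v ^ n) := by
  have h₁ : v ^ (2 - 2 * (n : ℤ)) * v ^ n = v ^ (2 - (n : ℤ)) := by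
    rw [← zpow_natCast, ← zpow_add₀ hv]; ring_nf
  have h₂ : v ^ (2 - (n : ℤ)) * v ^ n = v ^ 2 := by
    rw [← zpow_natCast, ← zpow_add₀ hv]; norm_num
  rw [q, valuePoly]
  linear_combination (2 * H + (H ^ 2 - 1) * v ^ n) * h₁ + (H ^ 2 - 1) * h₂

theorem hasDerivAt_q (hv : v ≠ 0) :
    HasDerivAt (q n H C) (2 * v ^ (1 - 2 * (n : ℤ)) * derivPoly n H (v ^ n)) v := by
  have h := (((hasDerivAt_const v C).sub (hasDerivAt_zpow (2 - 2 * (n : ℤ)) v (.inl hv))).add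
    ((hasDerivAt_pow 2 v).const_mul (1 - H ^ 2))).sub
    ((hasDerivAt_zpow (2 - (n : ℤ)) v (.inl hv)).const_mul (2 * H))
  refine h.congr_deriv ?_
  have h₁ : v ^ (1 - 2 * (n : ℤ)) * v ^ n = v ^ (1 - (n : ℤ)) := by
    rw [← zpow_natCast, ← zpow_add₀ hv]; ring_nf
  have h₂ : v ^ (1 - (n : ℤ)) * v ^ n = v := by
    rw [← zpow_natCast, ← zpow_add₀ hv]; norm_num
  rw [show 2 - 2 * (n : ℤ) - 1 = 1 - 2 * n by ring, show 2 - (n : ℤ) - 1 = 1 - n by ring,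
    derivPoly]
  push_cast
  linear_combination (-2 * H * (n - 2) - 2 * (1 - H ^ 2) * v ^ n) * h₁ - 2 * (1 - H ^ 2) * h₂

theorem valuePoly_nonneg_of_le (hH : H ≤ -1) (ht : (1 - H) * t ≤ 1) : 0 ≤ valuePoly H t := by
  rw [valuePoly]
  rcases le_total 0 t with h | h
  · exact mul_nonneg (by linarith) (by nlinarith)
  · exact mul_nonneg (by nlinarith) (by nlinarith)

theorem valuePoly_nonneg_of_ge (hH : H ≤ -1) (ht : 1 ≤ (-1 - H) * t) : 0 ≤ valuePoly H t := by
  have h : 0 < t := by nlinarith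
  exact mul_nonneg_of_nonpos_of_nonpos (by nlinarith) (by linarith)

theorem q_neg (hC : C < 0) (hv : 0 < v) (h : 0 ≤ valuePoly H (v ^ n)) : q n H C v < 0 := by
  rw [q_eq_sub_mul_valuePoly hv.ne']
  nlinarith [zpow_pos hv (2 - 2 * (n : ℤ))]

theorem eventually_q_neg_nhdsGT (hn : n ≠ 0) (hH : H ≤ -1) (hC : C < 0) :
    ∀ᶠ v in 𝓝[>] 0, q n H C v < 0 := by
  have hcont : Continuous fun v : ℝ => (1 - H) * v ^ n := by fun_prop
  have hpow : Tendsto (fun v : ℝ => (1 - H) * v ^ n) (𝓝[>] 0) (𝓝 0) :=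
    (hcont.tendsto' 0 0 (by simp [zero_pow hn])).mono_left nhdsWithin_le_nhds
  filter_upwards [self_mem_nhdsWithin, hpow.eventually (eventually_le_nhds zero_lt_one)]
    with v hv hle
  exact q_neg hC hv (valuePoly_nonneg_of_le hH hle)

theorem eventually_q_neg_atTop (hn : n ≠ 0) (hH : H < -1) (hC : C < 0) :
    ∀ᶠ v in atTop, q n H C v < 0 := by
  have hpow : Tendsto (fun v : ℝ => (-1 - H) * v ^ n) atTop atTop :=
    (tendsto_pow_atTop hn).const_mul_atTop (by linarith)
  filter_upwards [eventually_gt_atTop 0, hpow.eventually_ge_atTop 1] with v hv hge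
  exact q_neg hC hv (valuePoly_nonneg_of_ge hH.le hge)

theorem abs_lt_sqrt_discr (hn : 1 < n) (hH : 1 < H ^ 2) :
    |H * (n - 2)| < √(4 - 4 * n + H ^ 2 * n ^ 2) := by
  have hn' : (1 : ℝ) < n := by exact_mod_cast hn
  rw [lt_sqrt (abs_nonneg _), sq_abs]
  nlinarith [mul_pos (sub_pos.2 hH) (sub_pos.2 hn')]

theorem critRoot_pos (hn : 1 < n) (hH : 1 < H ^ 2) : 0 < critRoot n H :=
  div_pos (by linarith [neg_abs_le (H * (n - 2)), abs_lt_sqrt_discr hn hH]) (by linarith)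

theorem otherRoot_neg (hn : 1 < n) (hH : 1 < H ^ 2) : otherRoot n H < 0 :=
  div_neg_of_neg_of_pos (by linarith [le_abs_self (H * (n - 2)), abs_lt_sqrt_discr hn hH])
    (by linarith)

theorem derivPoly_eq_mul (hH : 1 < H ^ 2) (t : ℝ) :
    derivPoly n H t = (H ^ 2 - 1) * (critRoot n H - t) * (t - otherRoot n H) := by
  have hD : 0 ≤ 4 - 4 * (n : ℝ) + H ^ 2 * n ^ 2 := by
    nlinarith [mul_nonneg (sub_pos.2 hH).le (sq_nonneg (n : ℝ)), sq_nonneg ((n : ℝ) - 2)]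
  have hM : H ^ 2 - 1 ≠ 0 := by linarith
  have hs := sq_sqrt hD
  rw [derivPoly, critRoot, otherRoot]
  generalize √(4 - 4 * (n : ℝ) + H ^ 2 * n ^ 2) = s at hs
  rw [show 2 * H ^ 2 - 2 = 2 * (H ^ 2 - 1) by ring]
  field_simp
  linear_combination -hs

theorem derivPoly_pos (hn : 1 < n) (hH : 1 < H ^ 2) (ht : 0 < t) (htw : t < critRoot n H) :
    0 < derivPoly n H t := by
  rw [derivPoly_eq_mul hH]
  have := otherRoot_neg hn hH
  exact mul_pos (mul_pos (by linarith) (by linarith)) (by linarith)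

theorem derivPoly_neg (hn : 1 < n) (hH : 1 < H ^ 2) (htw : critRoot n H < t) :
    derivPoly n H t < 0 := by
  rw [derivPoly_eq_mul hH]
  have := otherRoot_neg hn hH
  have := critRoot_pos hn hH
  exact mul_neg_of_neg_of_pos (mul_neg_of_pos_of_neg (by linarith) (by linarith)) (by linarith)

theorem continuousOn_q : ContinuousOn (q n H C) (Ioi 0) :=
  fun _ hv => (hasDerivAt_q (ne_of_gt hv)).continuousAt.continuousWithinAt

theorem critPoint_pos (hn : 1 < n) (hH : 1 < H ^ 2) : 0 < critPoint n H :=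
  rpow_pos_of_pos (critRoot_pos hn hH) _

theorem critPoint_pow (hn : 1 < n) (hH : 1 < H ^ 2) : critPoint n H ^ n = critRoot n H :=
  rpow_inv_natCast_pow (critRoot_pos hn hH).le (by omega)

theorem strictMonoOn_q (hn : 1 < n) (hH : 1 < H ^ 2) :
    StrictMonoOn (q n H C) (Ioc 0 (critPoint n H)) := by
  refine strictMonoOn_of_hasDerivWithinAt_pos (convex_Ioc _ _)
    (continuousOn_q.mono Ioc_subset_Ioi_self)
    (fun x hx => (hasDerivAt_q (interior_subset hx).1.ne').hasDerivWithinAt) ?_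
  rw [interior_Ioc]
  rintro x ⟨hx, hxc⟩
  have hxn : x ^ n < critRoot n H :=
    critPoint_pow hn hH ▸ pow_lt_pow_left₀ hxc hx.le (by omega)
  exact mul_pos (mul_pos two_pos (zpow_pos hx _)) (derivPoly_pos hn hH (pow_pos hx n) hxn)

theorem strictAntiOn_q (hn : 1 < n) (hH : 1 < H ^ 2) :
    StrictAntiOn (q n H C) (Ici (critPoint n H)) := by
  have hc := critPoint_pos hn hH
  refine strictAntiOn_of_hasDerivWithinAt_neg (convex_Ici _)
    (continuousOn_q.mono fun x hx => hc.trans_le hx)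
    (fun x hx => (hasDerivAt_q (hc.trans_le (interior_subset hx)).ne').hasDerivWithinAt) ?_
  rw [interior_Ici]
  intro x hxc
  have hx : 0 < x := hc.trans hxc
  have hxn : critRoot n H < x ^ n :=
    critPoint_pow hn hH ▸ pow_lt_pow_left₀ hxc hc.le (by omega)
  exact mul_neg_of_pos_of_neg (mul_pos two_pos (zpow_pos hx _)) (derivPoly_neg hn hH hxn)

theorem valuePoly_critRoot (hH : 1 < H ^ 2) :
    valuePoly H (critRoot n H) = n * (1 + H * critRoot n H) := by
  have h := derivPoly_eq_mul (n := n) hH (critRoot n H)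
  rw [sub_self, mul_zero, zero_mul, derivPoly] at h
  rw [valuePoly]
  linear_combination -h

theorem critConst_eq (hn : 1 < n) (hH : 1 < H ^ 2) :
    critConst n H = n * (1 + H * critRoot n H) * critRoot n H ^ ((2 - 2 * n : ℝ) / n) := by
  have hn' : (0 : ℝ) < n := by positivity
  have hN : 0 < H * (n - 2) + √(4 - 4 * n + H ^ 2 * n ^ 2) := by
    linarith [neg_abs_le (H * (n - 2)), abs_lt_sqrt_discr hn hH]
  have hM : 0 < 2 * H ^ 2 - 2 := by linarith
  have hexp : (2 - 2 * n : ℝ) / n = -((2 * n - 2) / n) := by ring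
  have hexp' : (2 - 2 * n : ℝ) / n = -((n - 2) / n + 1) := by field_simp; ring
  rw [critConst, critRoot, div_rpow hN.le hM.le, hexp, rpow_neg hN.le, ← hexp, hexp',
    rpow_neg hM.le, rpow_add hM, rpow_one]
  generalize (2 * H ^ 2 - 2) ^ (((n : ℝ) - 2) / n) = P
  generalize (H * (n - 2) + √(4 - 4 * (n : ℝ) + H ^ 2 * n ^ 2)) ^ ((2 * (n : ℝ) - 2) / n) = Q
  have : H ^ 2 - 1 ≠ 0 := by linarith
  field_simp
  ring

theorem q_critPoint (hn : 1 < n) (hH : 1 < H ^ 2) :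
    q n H C (critPoint n H) = C - critConst n H := by
  have hw := critRoot_pos hn hH
  have hpow : critPoint n H ^ (2 - 2 * (n : ℤ)) = critRoot n H ^ ((2 - 2 * n : ℝ) / n) := by
    rw [critPoint, ← rpow_intCast, ← rpow_mul hw.le]
    push_cast
    ring_nf
  rw [q_eq_sub_mul_valuePoly (critPoint_pos hn hH).ne', critPoint_pow hn hH, valuePoly_critRoot hH,
    critConst_eq hn hH, hpow]
  ring

end

theorem stmt_2 (n : ℕ) (hn : 1 < n) (H : ℝ) (hH : H < -1) (C : ℝ)
    (hC0 : (n : ℝ) * ((H ^ 2 * n - 2 + H * Real.sqrt (4 - 4 * n + H ^ 2 * n ^ 2)) /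
        (H * ((n : ℝ) - 2) + Real.sqrt (4 - 4 * n + H ^ 2 * n ^ 2)) ^ ((2 * (n : ℝ) - 2) / n)) *
        (2 * H ^ 2 - 2) ^ (((n : ℝ) - 2) / n) < C)
    (hC : C < 0) :
    ∃ a b : ℝ, 0 < a ∧ 0 < b ∧ a ≠ b ∧
      C - a ^ (2 - 2 * (n : ℤ)) + (1 - H ^ 2) * a ^ 2 - 2 * H * a ^ (2 - (n : ℤ)) = 0 ∧
      C - b ^ (2 - 2 * (n : ℤ)) + (1 - H ^ 2) * b ^ 2 - 2 * H * b ^ (2 - (n : ℤ)) = 0 ∧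
      ∀ v : ℝ, 0 < v →
        C - v ^ (2 - 2 * (n : ℤ)) + (1 - H ^ 2) * v ^ 2 - 2 * H * v ^ (2 - (n : ℤ)) = 0 →
        v = a ∨ v = b := by
  have hH2 : 1 < H ^ 2 := by nlinarith
  have hpeak : 0 < q n H C (critPoint n H) := by
    rw [q_critPoint hn hH2]
    exact sub_pos.2 hC0
  exact exists_two_zeros_of_strictMonoOn_of_strictAntiOn (critPoint_pos hn hH2) continuousOn_q
    (strictMonoOn_q hn hH2) (strictAntiOn_q hn hH2) hpeak
    (eventually_q_neg_nhdsGT (by omega) hH.le hC) (eventually_q_neg_atTop (by omega) hH hC)
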